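/- Every Eulerian orientation of the hypercube Q_{2k} is strongly k-vertex-connected. -/

import Mathlib

open Finset

variable {V : Type*} [Fintype V] [DecidableEq V]

/-- Out-degree of `v` in the digraph given by `D`. -/
def outDeg (D : V → V → Bool) (v : V) : ℕ :=
  (Finset.univ.filter (fun w => D v w = true)).card

/-- In-degree of `v` in the digraph given by `D`. -/
def inDeg (D : V → V → Bool) (v : V) : ℕ :=
  (Finset.univ.filter (fun w => D w v = true)).card

/-- `D` is an orientation of the simple graph `G`: every arc of `D` is an edge of `G`,
and every edge of `G` receives exactly one of the two directions. -/
def IsOrientation (G : SimpleGraph V) (D : V → V → Bool) : Prop :=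
  (∀ v w, D v w = true → G.Adj v w) ∧ ∀ v w, G.Adj v w → (D v w = true ↔ D w v = false)

/-- An Eulerian orientation: an orientation with in-degree equal to out-degree everywhere. -/
def IsEulerianOrientation (G : SimpleGraph V) (D : V → V → Bool) : Prop :=
  IsOrientation G D ∧ ∀ v, inDeg D v = outDeg D v

/-- Number of arcs of `D` going from `A` to `B`. -/
def arcs (D : V → V → Bool) (A B : Finset V) : ℕ :=
  ((A ×ˢ B).filter (fun p => D p.1 p.2 = true)).card

/-- The digraph `D` is strongly connected on the vertex set `A`. -/
def StronglyConnectedOn (D : V → V → Bool) (A : Finset V) : Prop :=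
  ∀ v ∈ A, ∀ w ∈ A,
    Relation.ReflTransGen (fun a b => a ∈ A ∧ b ∈ A ∧ D a b = true) v w

/-- The digraph `D` is strongly `k`-vertex-connected: it has at least `k+1` vertices and
deleting any set of at most `k-1` vertices leaves a strongly connected digraph. -/
def StronglyKConnected (k : ℕ) (D : V → V → Bool) : Prop :=
  k + 1 ≤ Fintype.card V ∧
    ∀ Z : Finset V, Z.card ≤ k - 1 → StronglyConnectedOn D (Finset.univ \ Z)

/-- The `d`-dimensional hypercube graph on vertex set `Fin d → Bool`. -/
def cube (d : ℕ) : SimpleGraph (Fin d → Bool) where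
  Adj v w := (Finset.univ.filter (fun i => v i ≠ w i)).card = 1
  symm := ⟨by
    intro v w h
    have he : (Finset.univ.filter (fun i => w i ≠ v i))
        = (Finset.univ.filter (fun i => v i ≠ w i)) := by
      apply Finset.filter_congr; intro i _; simp [ne_comm]
    rw [he]; exact h⟩
  loopless := ⟨by intro v h; simp at h⟩

/-- Number of external neighbors of the vertex set `S` in `G`. -/
noncomputable def extNbrCard (G : SimpleGraph V) (S : Finset V) : ℕ :=
  {w | w ∉ S ∧ ∃ v ∈ S, G.Adj v w}.ncard

/-- Harper's vertex-isoperimetric quantity `b_v(m, Q_{2k})`: the minimum number of external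
neighbors over all vertex sets of size `m` in the hypercube `Q_{2k}`. -/
noncomputable def bv (k m : ℕ) : ℕ :=
  sInf {n | ∃ S : Finset (Fin (2 * k) → Bool), S.card = m ∧ extNbrCard (cube (2 * k)) S = n}

/-!
If deleting a set `Z` of fewer than `k` vertices destroys strong connectivity, the remaining
vertices split into nonempty sets `A`, `B` with no arc from `A` to `B`; reversing all arcs if
necessary, `|A| ≤ |B|`, so `|A| ≤ 2^(2k-1)`. Each vertex of `A` sends its `k` out-arcs into
`A ∪ Z` and each vertex of `Z` receives only `k` arcs, so `2k|A| = e(A, A) + 2·arcs(A, Z)` with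
`arcs(A, Z) ≤ min (k|Z|) e(A, Z)`, where `e(S, T)` counts ordered adjacent pairs in `S × T`.
The hypercube forbids this:
* if `|A| ≤ k`: two vertices of the cube have at most two common neighbours and the cube is
  triangle-free, so `e(A, A) + e(Z, A) ≤ |Z| + |A|(|A| - 1)`;
* if `|A| > 2k|Z|`: the edge-isoperimetric inequality `2^e(S, S) ≤ |S|^|S|` (split `S` along a
  coordinate) gives `e(A, A) ≤ (2k-1)|A|`;
* otherwise `A ∪ Z` has fewer than `2^(k+1)` vertices, so by the same inequality
  `e(A, A) + 2e(A, Z) ≤ e(A ∪ Z, A ∪ Z) < (k+1)|A ∪ Z| ≤ 2k|A|`.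
-/

section Orientation

variable {α : Type*} {G : SimpleGraph α} {D : α → α → Bool}

lemma IsOrientation.adj_iff (hD : IsOrientation G D) {v w : α} :
    G.Adj v w ↔ D v w = true ∨ D w v = true := by
  refine ⟨fun h => ?_, fun h => h.elim (hD.1 v w) fun h => (hD.1 w v h).symm⟩
  cases hvw : D v w
  · exact .inr (by simpa [hvw] using hD.2 w v h.symm)
  · exact .inl rfl

lemma IsOrientation.not_and (hD : IsOrientation G D) {v w : α} :
    ¬(D v w = true ∧ D w v = true) := fun ⟨h, h'⟩ => by
  simp [(hD.2 v w (hD.1 v w h)).1 h] at h'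

lemma IsOrientation.reverse (hD : IsOrientation G D) : IsOrientation G (fun v w => D w v) :=
  ⟨fun v w h => (hD.1 w v h).symm, fun v w h => hD.2 w v h.symm⟩

lemma IsEulerianOrientation.reverse [Fintype α] [DecidableEq α]
    (hD : IsEulerianOrientation G D) : IsEulerianOrientation G (fun v w => D w v) :=
  ⟨hD.1.reverse, fun v => (hD.2 v).symm⟩

lemma IsOrientation.outDeg_add_inDeg [Fintype α] [DecidableEq α] [DecidableRel G.Adj]
    (hD : IsOrientation G D) (v : α) : outDeg D v + inDeg D v = G.degree v := by
  rw [← G.card_neighborFinset_eq_degree, G.neighborFinset_eq_filter, outDeg, inDeg,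
    ← card_union_of_disjoint (disjoint_filter.2 fun w _ h h' => hD.not_and ⟨h, h'⟩),
    ← filter_or]
  simp [hD.adj_iff]

lemma IsEulerianOrientation.outDeg_eq [Fintype α] [DecidableEq α] [DecidableRel G.Adj] {k : ℕ}
    (hD : IsEulerianOrientation G D) (hG : G.IsRegularOfDegree (2 * k)) (v : α) :
    outDeg D v = k := by
  have := hD.1.outDeg_add_inDeg v
  rw [hD.2 v, hG.degree_eq] at this
  omega

lemma IsEulerianOrientation.inDeg_eq [Fintype α] [DecidableEq α] [DecidableRel G.Adj] {k : ℕ}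
    (hD : IsEulerianOrientation G D) (hG : G.IsRegularOfDegree (2 * k)) (v : α) :
    inDeg D v = k :=
  (hD.2 v).trans (hD.outDeg_eq hG v)

lemma arcs_mono [Fintype α] [DecidableEq α] {A A' B B' : Finset α} (hA : A ⊆ A')
    (hB : B ⊆ B') : arcs D A B ≤ arcs D A' B' :=
  card_le_card (filter_subset_filter _ (product_subset_product hA hB))

lemma arcs_union_right [Fintype α] [DecidableEq α] (A : Finset α) {B C : Finset α}
    (h : Disjoint B C) : arcs D A (B ∪ C) = arcs D A B + arcs D A C := by
  rw [arcs, product_union, filter_union, card_union_of_disjoint]; · rfl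
  exact disjoint_filter_filter (disjoint_product.2 (.inr h))

lemma arcs_univ_right [Fintype α] [DecidableEq α] (A : Finset α) :
    arcs D A univ = ∑ a ∈ A, outDeg D a := by
  rw [arcs, card_filter, sum_product]
  exact sum_congr rfl fun a _ => (card_filter _ _).symm

lemma arcs_univ_left [Fintype α] [DecidableEq α] (B : Finset α) :
    arcs D univ B = ∑ b ∈ B, inDeg D b := by
  rw [arcs, card_filter, sum_product_right]
  exact sum_congr rfl fun b _ => (card_filter _ _).symm

lemma IsOrientation.arcs_le_card_interedges [Fintype α] [DecidableEq α] [DecidableRel G.Adj]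
    (hD : IsOrientation G D) (A B : Finset α) : arcs D A B ≤ #(G.interedges A B) :=
  card_le_card (monotone_filter_right _ fun p _ h => hD.1 p.1 p.2 h)

lemma IsOrientation.two_mul_arcs_self [Fintype α] [DecidableEq α] [DecidableRel G.Adj]
    (hD : IsOrientation G D) (S : Finset α) : 2 * arcs D S S = #(G.interedges S S) := by
  have hsplit :
      G.interedges S S = {p ∈ S ×ˢ S | D p.1 p.2} ∪ {p ∈ S ×ˢ S | D p.2 p.1} := by
    ext p
    simp only [SimpleGraph.mem_interedges_iff, hD.adj_iff, mem_union, mem_filter, mem_product]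
    tauto
  have hswap : #{p ∈ S ×ˢ S | D p.2 p.1} = arcs D S S :=
    card_nbij' Prod.swap Prod.swap (fun p hp => by simp_all) (fun p hp => by simp_all)
      (fun p _ => p.swap_swap) (fun p _ => p.swap_swap)
  rw [hsplit, card_union_of_disjoint (disjoint_filter.2 fun p _ h h' => hD.not_and ⟨h, h'⟩),
    hswap, arcs]
  ring

variable [Fintype α] [DecidableEq α] [DecidableRel G.Adj] {k : ℕ}

lemma IsEulerianOrientation.two_mul_mul_card_eq (hD : IsEulerianOrientation G D)
    (hG : G.IsRegularOfDegree (2 * k)) {X Z : Finset α} (hXZ : Disjoint X Z)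
    (hX : ∀ a ∈ X, ∀ b, D a b = true → b ∈ X ∪ Z) :
    2 * k * #X = #(G.interedges X X) + 2 * arcs D X Z := by
  have hout : arcs D X univ = arcs D X (X ∪ Z) := by
    unfold arcs
    congr 1
    ext ⟨a, b⟩
    simp only [mem_filter, mem_product, mem_univ, and_true]
    exact ⟨fun h => ⟨⟨h.1, hX a h.1 b h.2⟩, h.2⟩, fun h => ⟨h.1.1, h.2⟩⟩
  rw [arcs_union_right _ hXZ, arcs_univ_right, sum_congr rfl fun a _ => hD.outDeg_eq hG a,
    sum_const, smul_eq_mul] at hout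
  rw [← hD.1.two_mul_arcs_self, mul_assoc, mul_comm k, hout]
  ring

lemma IsEulerianOrientation.arcs_le_mul_card (hD : IsEulerianOrientation G D)
    (hG : G.IsRegularOfDegree (2 * k)) (X Z : Finset α) : arcs D X Z ≤ k * #Z :=
  calc arcs D X Z ≤ arcs D univ Z := arcs_mono (subset_univ X) subset_rfl
    _ = k * #Z := by
      rw [arcs_univ_left, sum_congr rfl fun z _ => hD.inDeg_eq hG z, sum_const, smul_eq_mul,
        mul_comm]

end Orientation

namespace SimpleGraph

variable {α : Type*} (G : SimpleGraph α) [DecidableRel G.Adj]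

lemma card_interedges_comm (s t : Finset α) : #(G.interedges s t) = #(G.interedges t s) :=
  have := G.symm
  Rel.card_interedges_comm s t

lemma card_filter_not_adj_offDiag_add_card_interedges (X : Finset α) :
    #{p ∈ X.offDiag | ¬G.Adj p.1 p.2} + #(G.interedges X X) = #X * #X - #X := by
  have : G.interedges X X = {p ∈ X.offDiag | G.Adj p.1 p.2} := by
    ext p
    simp only [mem_interedges_iff, mem_filter, mem_offDiag]
    exact ⟨fun h => ⟨⟨h.1, h.2.1, h.2.2.ne⟩, h.2.2⟩, fun h => ⟨h.1.1, h.1.2.1, h.2⟩⟩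
  rw [this, add_comm, card_filter_add_card_filter_not, offDiag_card]

variable [DecidableEq α]

lemma card_interedges_union_left {s₁ s₂ : Finset α} (h : Disjoint s₁ s₂) (t : Finset α) :
    #(G.interedges (s₁ ∪ s₂) t) = #(G.interedges s₁ t) + #(G.interedges s₂ t) := by
  rw [← card_union_of_disjoint (G.interedges_disjoint_left h t), interedges_def, interedges_def,
    interedges_def, union_product, filter_union]

lemma card_interedges_union_right (s : Finset α) {t₁ t₂ : Finset α} (h : Disjoint t₁ t₂) :
    #(G.interedges s (t₁ ∪ t₂)) = #(G.interedges s t₁) + #(G.interedges s t₂) := by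
  rw [card_interedges_comm, card_interedges_union_left _ h, card_interedges_comm,
    G.card_interedges_comm t₂]

lemma card_interedges_add_two_mul_le_card_interedges_union {s t : Finset α} (h : Disjoint s t) :
    #(G.interedges s s) + 2 * #(G.interedges s t) ≤ #(G.interedges (s ∪ t) (s ∪ t)) := by
  rw [card_interedges_union_left _ h, card_interedges_union_right _ _ h,
    card_interedges_union_right _ _ h, G.card_interedges_comm t s]
  omega

end SimpleGraph

open Real in
lemma two_mul_log_two_le_binEntropy {t : ℝ} (ht₀ : 0 ≤ t) (ht : t ≤ 2⁻¹) :
    2 * t * log 2 ≤ binEntropy t := by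
  have h := strictConcave_binEntropy.concaveOn.2 (Set.left_mem_Icc.2 zero_le_one)
    (⟨by norm_num, by norm_num⟩ : (2⁻¹ : ℝ) ∈ Set.Icc 0 1)
    (by linarith : 0 ≤ 1 - 2 * t) (by linarith : 0 ≤ 2 * t) (by ring)
  simp only [smul_eq_mul, binEntropy_zero, binEntropy_two_inv, mul_zero, zero_add] at h
  rwa [show 2 * t * 2⁻¹ = t by ring] at h

lemma pow_mul_pow_mul_four_pow_le {a b : ℕ} (hb : 0 < b) (hba : b ≤ a) :
    a ^ a * b ^ b * 4 ^ b ≤ (a + b) ^ (a + b) := by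
  have ha : 0 < a := hb.trans_le hba
  have hn : (0 : ℝ) < a + b := by positivity
  have hH := two_mul_log_two_le_binEntropy (t := b / (a + b)) (by positivity)
    (by rw [div_le_iff₀ hn]; linarith [(Nat.cast_le (α := ℝ)).2 hba])
  have hent : ((a : ℝ) + b) * Real.binEntropy (b / (a + b))
      = (a + b) * Real.log (a + b) - a * Real.log a - b * Real.log b := by
    have h1 : 1 - (b : ℝ) / (a + b) = a / (a + b) := by field_simp; ring
    rw [Real.binEntropy, h1, inv_div, inv_div, Real.log_div hn.ne' (by positivity),
      Real.log_div hn.ne' (by positivity)]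
    field_simp
    ring
  have e : ((a : ℝ) + b) * (2 * (b / (a + b)) * Real.log 2) = b * (2 * Real.log 2) := by
    field_simp
  rw [← Nat.cast_le (α := ℝ), ← Real.log_le_log_iff (by positivity) (by positivity)]
  push_cast
  rw [Real.log_mul (by positivity) (by positivity), Real.log_mul (by positivity) (by positivity),
    Real.log_pow, Real.log_pow, Real.log_pow, Real.log_pow,
    show (4 : ℝ) = 2 ^ 2 by norm_num, Real.log_pow]
  push_cast
  nlinarith [mul_le_mul_of_nonneg_left hH hn.le]

lemma pow_mul_pow_mul_four_pow_min_le (a b : ℕ) :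
    a ^ a * b ^ b * 4 ^ min a b ≤ (a + b) ^ (a + b) := by
  wlog hba : b ≤ a generalizing a b
  · have := this b a (by omega)
    rwa [min_comm, add_comm, mul_comm (b ^ b)] at this
  rcases Nat.eq_zero_or_pos b with rfl | hb
  · simp
  · rw [min_eq_right hba]
    exact pow_mul_pow_mul_four_pow_le hb hba

section Cube

variable {d : ℕ}

instance : DecidableRel (cube d).Adj := fun _ _ => inferInstanceAs (Decidable (_ = 1))

def flipAt (i : Fin d) (v : Fin d → Bool) : Fin d → Bool := Function.update v i (!v i)

@[simp] lemma flipAt_apply_self (i : Fin d) (v : Fin d → Bool) : flipAt i v i = !v i := by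
  simp [flipAt]

@[simp] lemma flipAt_apply_of_ne {i j : Fin d} (v : Fin d → Bool) (h : j ≠ i) :
    flipAt i v j = v j := by
  simp [flipAt, h]

@[simp] lemma flipAt_flipAt (i : Fin d) (v : Fin d → Bool) : flipAt i (flipAt i v) = v := by
  funext j
  by_cases h : j = i
  · subst h; simp
  · simp [h]

lemma flipAt_left_injective (v : Fin d → Bool) : Function.Injective (flipAt · v) := by
  intro i j h
  by_contra hij
  simpa [hij] using congrFun h i

lemma cube_adj_iff {v w : Fin d → Bool} : (cube d).Adj v w ↔ ∃ i, w = flipAt i v := by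
  change #{i | v i ≠ w i} = 1 ↔ _
  rw [card_eq_one]
  refine exists_congr fun i => ⟨fun h => funext fun j => ?_, ?_⟩
  · have hj : v j ≠ w j ↔ j = i := by simpa using Finset.ext_iff.1 h j
    by_cases hji : j = i
    · subst hji
      simpa [Bool.eq_not_iff] using (hj.2 rfl).symm
    · simp only [hji, iff_false, not_not] at hj
      simp [hji, hj]
  · rintro rfl
    ext j
    by_cases hji : j = i
    · subst hji; simp
    · simp [hji]

lemma eq_flipAt_of_cube_adj {v w : Fin d → Bool} {i : Fin d} (h : (cube d).Adj v w)
    (hi : w i ≠ v i) : w = flipAt i v := by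
  obtain ⟨j, rfl⟩ := cube_adj_iff.1 h
  by_cases hij : i = j
  · rw [hij]
  · simp [hij] at hi

lemma cube_isRegularOfDegree : (cube d).IsRegularOfDegree d := by
  intro v
  have : (cube d).neighborFinset v = univ.image (flipAt · v) := by
    ext w
    simp [cube_adj_iff, eq_comm]
  rw [← SimpleGraph.card_neighborFinset_eq_degree, this,
    card_image_of_injective _ (flipAt_left_injective v), card_univ, Fintype.card_fin]

lemma cube_not_adj_of_adj_of_adj {z a a' : Fin d → Bool} (ha : (cube d).Adj z a)
    (ha' : (cube d).Adj z a') (hne : a ≠ a') : ¬(cube d).Adj a a' := by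
  obtain ⟨i, rfl⟩ := cube_adj_iff.1 ha
  obtain ⟨j, rfl⟩ := cube_adj_iff.1 ha'
  have hij : i ≠ j := by rintro rfl; exact hne rfl
  rintro hadj
  obtain ⟨l, hl⟩ := cube_adj_iff.1 hadj
  by_cases hli : l = i
  · subst hli
    simpa [hij] using congrFun hl j
  · simpa [hij, Ne.symm hli] using congrFun hl i

lemma card_common_neighbors_le_two {a a' : Fin d → Bool} (hne : a ≠ a')
    (Z : Finset (Fin d → Bool)) : #{z ∈ Z | (cube d).Adj z a ∧ (cube d).Adj z a'} ≤ 2 := by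
  set C := {z ∈ Z | (cube d).Adj z a ∧ (cube d).Adj z a'}
  obtain h | ⟨z₀, hz₀⟩ := C.eq_empty_or_nonempty
  · simp [h]
  have hsub : C ⊆ image (flipAt · a) {i | a i ≠ a' i} := by
    intro z hz
    simp only [C, mem_filter] at hz
    obtain ⟨i, rfl⟩ := cube_adj_iff.1 hz.2.1.symm
    refine mem_image.2 ⟨i, mem_filter.2 ⟨mem_univ _, fun hi => hne ?_⟩, rfl⟩
    have := eq_flipAt_of_cube_adj (i := i) hz.2.2.symm (by simp [hi])
    rw [← flipAt_flipAt i a, this, flipAt_flipAt]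
  simp only [C, mem_filter] at hz₀
  calc #C ≤ #{i | a i ≠ a' i} := (card_le_card hsub).trans card_image_le
    _ = hammingDist a a' := rfl
    _ ≤ hammingDist a z₀ + hammingDist z₀ a' := hammingDist_triangle _ _ _
    _ = 2 := by
      rw [hammingDist_comm, show hammingDist z₀ a = 1 from hz₀.2.1,
        show hammingDist z₀ a' = 1 from hz₀.2.2]

lemma card_interedges_le_card_of_apply_ne {s t : Finset (Fin d → Bool)} (i : Fin d)
    (h : ∀ a ∈ s, ∀ b ∈ t, a i ≠ b i) : #((cube d).interedges s t) ≤ #s := by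
  refine card_le_card_of_injOn Prod.fst (fun p hp => ((cube d).mem_interedges_iff.1 hp).1) ?_
  rintro ⟨a, b⟩ hp ⟨a', b'⟩ hp' (rfl : a = a')
  obtain ⟨ha, hb, hab⟩ := (cube d).mk_mem_interedges_iff.1 hp
  obtain ⟨-, hb', hab'⟩ := (cube d).mk_mem_interedges_iff.1 hp'
  rw [eq_flipAt_of_cube_adj hab (h a ha b hb).symm, eq_flipAt_of_cube_adj hab' (h a ha b' hb').symm]

theorem two_pow_card_interedges_le (S : Finset (Fin d → Bool)) :
    2 ^ #((cube d).interedges S S) ≤ #S ^ #S := by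
  induction S using Finset.strongInduction with | H S ih =>
  by_cases hS : ∃ a ∈ S, ∃ b ∈ S, a ≠ b
  · obtain ⟨a, ha, b, hb, hab⟩ := hS
    obtain ⟨i, hi⟩ := Function.ne_iff.1 hab
    set S₁ := {v ∈ S | v i = true}
    set S₀ := {v ∈ S | ¬v i = true}
    have hdisj : Disjoint S₁ S₀ := disjoint_filter_filter_not S S _
    have hunion : S₁ ∪ S₀ = S := filter_union_filter_not_eq _ S
    have hS₁ : S₁ ⊂ S := filter_ssubset.2 <| by
      cases hai : a i
      · exact ⟨a, ha, by simp [hai]⟩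
      · exact ⟨b, hb, by simpa [hai] using hi.symm⟩
    have hS₀ : S₀ ⊂ S := filter_ssubset.2 <| by
      cases hai : a i
      · exact ⟨b, hb, by simpa [hai] using hi.symm⟩
      · exact ⟨a, ha, by simp [hai]⟩
    have hcross : #((cube d).interedges S₁ S₀) ≤ min #S₁ #S₀ :=
      le_min (card_interedges_le_card_of_apply_ne i fun a ha b hb => by simp_all [S₁, S₀])
        (((cube d).card_interedges_comm _ _).trans_le
          (card_interedges_le_card_of_apply_ne i fun a ha b hb => by simp_all [S₁, S₀]))
    have hsplit : #((cube d).interedges S S) = #((cube d).interedges S₁ S₁)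
        + #((cube d).interedges S₀ S₀) + 2 * #((cube d).interedges S₁ S₀) := by
      rw [← hunion, (cube d).card_interedges_union_left hdisj,
        (cube d).card_interedges_union_right _ hdisj, (cube d).card_interedges_union_right _ hdisj,
        (cube d).card_interedges_comm S₀ S₁]
      ring
    calc 2 ^ #((cube d).interedges S S)
        ≤ 2 ^ #((cube d).interedges S₁ S₁) * 2 ^ #((cube d).interedges S₀ S₀)
          * 4 ^ min #S₁ #S₀ := by
          rw [hsplit, pow_add, pow_add, pow_mul]
          exact Nat.mul_le_mul_left _ (Nat.pow_le_pow_right (by norm_num) hcross)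
      _ ≤ #S₁ ^ #S₁ * #S₀ ^ #S₀ * 4 ^ min #S₁ #S₀ :=
          Nat.mul_le_mul_right _ (Nat.mul_le_mul (ih _ hS₁) (ih _ hS₀))
      _ ≤ (#S₁ + #S₀) ^ (#S₁ + #S₀) := pow_mul_pow_mul_four_pow_min_le _ _
      _ = #S ^ #S := by rw [← card_union_of_disjoint hdisj, hunion]
  · push Not at hS
    have : (cube d).interedges S S = ∅ := eq_empty_of_forall_notMem fun p hp => by
      rw [SimpleGraph.mem_interedges_iff] at hp
      exact hp.2.2.ne (hS _ hp.1 _ hp.2.1)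
    rw [this, card_empty, pow_zero]
    exact Nat.one_le_iff_ne_zero.2 (by simp)

lemma card_interedges_self_le_mul {S : Finset (Fin d → Bool)} {j : ℕ} (h : #S ≤ 2 ^ j) :
    #((cube d).interedges S S) ≤ j * #S := by
  refine (Nat.pow_le_pow_iff_right (by norm_num : 1 < 2)).1 ?_
  rw [pow_mul]
  exact (two_pow_card_interedges_le S).trans (Nat.pow_le_pow_left h _)

lemma card_interedges_self_lt_mul {S : Finset (Fin d → Bool)} {j : ℕ} (hS : S.Nonempty)
    (h : #S < 2 ^ j) : #((cube d).interedges S S) < j * #S := by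
  refine (Nat.pow_lt_pow_iff_right (by norm_num : 1 < 2)).1 ?_
  rw [pow_mul]
  exact (two_pow_card_interedges_le S).trans_lt (Nat.pow_lt_pow_left h hS.card_pos.ne')

lemma sum_card_offDiag_neighbors_le (X Z : Finset (Fin d → Bool)) :
    ∑ z ∈ Z, #({a ∈ X | (cube d).Adj z a}.offDiag)
      ≤ 2 * #{p ∈ X.offDiag | ¬(cube d).Adj p.1 p.2} := by
  set N := {p ∈ X.offDiag | ¬(cube d).Adj p.1 p.2}
  have hnbrs : ∀ z, {a ∈ X | (cube d).Adj z a}.offDiag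
      = N.bipartiteAbove (fun z p => (cube d).Adj z p.1 ∧ (cube d).Adj z p.2) z := by
    intro z
    ext ⟨a, b⟩
    simp only [bipartiteAbove, N, mem_filter, mem_offDiag]
    refine
      ⟨fun ⟨⟨ha, hza⟩, ⟨hb, hzb⟩, hab⟩ => ⟨⟨⟨ha, hb, hab⟩, ?_⟩, hza, hzb⟩,
        fun ⟨⟨⟨ha, hb, hab⟩, _⟩, hza, hzb⟩ => ⟨⟨ha, hza⟩, ⟨hb, hzb⟩, hab⟩⟩
    exact cube_not_adj_of_adj_of_adj hza hzb hab
  calc ∑ z ∈ Z, #({a ∈ X | (cube d).Adj z a}.offDiag)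
      = ∑ p ∈ N,
          #(Z.bipartiteBelow (fun z p => (cube d).Adj z p.1 ∧ (cube d).Adj z p.2) p) := by
        simp_rw [hnbrs]
        exact sum_card_bipartiteAbove_eq_sum_card_bipartiteBelow _
    _ ≤ ∑ _p ∈ N, 2 := sum_le_sum fun p hp =>
        card_common_neighbors_le_two (mem_offDiag.1 (mem_filter.1 hp).1).2.2 Z
    _ = 2 * #N := by rw [sum_const, smul_eq_mul, mul_comm]

lemma card_interedges_self_add_card_interedges_le (X Z : Finset (Fin d → Bool)) :
    #((cube d).interedges X X) + #((cube d).interedges Z X) ≤ #Z + #X * (#X - 1) := by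
  have hZX : #((cube d).interedges Z X) = ∑ z ∈ Z, #{a ∈ X | (cube d).Adj z a} := by
    rw [SimpleGraph.interedges_def, card_filter, sum_product]
    exact sum_congr rfl fun _ _ => (card_filter _ _).symm
  have hpoint : ∀ x : ℕ, 2 * x ≤ 2 + (x * x - x) := by
    intro x
    rcases Nat.lt_or_ge x 2 with hx | hx
    · interval_cases x <;> simp
    · have := Nat.le_mul_self x
      zify [this]
      nlinarith
  have hsum : 2 * #((cube d).interedges Z X)
      ≤ 2 * #Z + 2 * #{p ∈ X.offDiag | ¬(cube d).Adj p.1 p.2} :=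
    calc 2 * #((cube d).interedges Z X) = ∑ z ∈ Z, 2 * #{a ∈ X | (cube d).Adj z a} := by
          rw [hZX, mul_sum]
      _ ≤ ∑ z ∈ Z, (2 + #({a ∈ X | (cube d).Adj z a}.offDiag)) :=
          sum_le_sum fun z _ => offDiag_card _ ▸ hpoint _
      _ ≤ 2 * #Z + 2 * #{p ∈ X.offDiag | ¬(cube d).Adj p.1 p.2} := by
          rw [sum_add_distrib, sum_const, smul_eq_mul, mul_comm]
          exact Nat.add_le_add_left (sum_card_offDiag_neighbors_le X Z) _
  have := (cube d).card_filter_not_adj_offDiag_add_card_interedges X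
  rw [Nat.mul_sub_one]
  omega

end Cube

lemma two_mul_add_one_mul_sub_one_lt_two_pow (k : ℕ) : (2 * k + 1) * (k - 1) < 2 ^ (k + 1) := by
  rcases Nat.lt_or_ge k 3 with hk | hk
  · interval_cases k <;> norm_num
  obtain ⟨n, rfl⟩ := Nat.exists_eq_add_of_le' hk
  clear hk
  rw [show n + 3 - 1 = n + 2 by omega]
  induction n with
  | zero => norm_num
  | succ n ih =>
    rw [pow_succ]
    nlinarith

theorem card_interedges_add_two_mul_min_lt {k : ℕ} {X Z : Finset (Fin (2 * k) → Bool)}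
    (hXZ : Disjoint X Z) (hX : X.Nonempty) (hX2 : 2 * #X ≤ 2 ^ (2 * k)) (hZ : #Z < k) :
    #((cube (2 * k)).interedges X X) + 2 * min (k * #Z) #((cube (2 * k)).interedges X Z)
      < 2 * k * #X := by
  have hmin₁ := min_le_left (k * #Z) #((cube (2 * k)).interedges X Z)
  have hmin₂ := min_le_right (k * #Z) #((cube (2 * k)).interedges X Z)
  rcases le_or_gt #X k with hXk | hkX
  · have h := card_interedges_self_add_card_interedges_le X Z
    rw [(cube _).card_interedges_comm Z X] at h
    have h₁ : #X * (#X - 1) ≤ k * (#X - 1) := Nat.mul_le_mul_right _ hXk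
    have h₂ : k * (#X - 1) + k = k * #X := by
      rw [← Nat.mul_succ, Nat.succ_eq_add_one, Nat.sub_add_cancel hX.card_pos]
    linarith
  rcases lt_or_ge (2 * k * #Z) #X with hlarge | hmid
  · have hX' : #X ≤ 2 ^ (2 * k - 1) := by
      have : 2 ^ (2 * k) = 2 ^ (2 * k - 1) * 2 := by
        rw [← pow_succ, Nat.sub_add_cancel (by omega)]
      omega
    have h := card_interedges_self_le_mul hX'
    have : (2 * k - 1) * #X + #X = 2 * k * #X := by
      rw [← Nat.succ_mul, Nat.succ_eq_add_one, Nat.sub_add_cancel (by omega)]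
    nlinarith
  · have hU : #(X ∪ Z) < 2 ^ (k + 1) := by
      rw [card_union_of_disjoint hXZ]
      calc #X + #Z ≤ (2 * k + 1) * #Z := by linarith
        _ ≤ (2 * k + 1) * (k - 1) := Nat.mul_le_mul_left _ (by omega)
        _ < 2 ^ (k + 1) := two_mul_add_one_mul_sub_one_lt_two_pow k
    have h₁ := card_interedges_self_lt_mul (hX.mono subset_union_left) hU
    have h₂ := (cube (2 * k)).card_interedges_add_two_mul_le_card_interedges_union hXZ
    rw [card_union_of_disjoint hXZ] at h₁
    have : (k + 1) * (#X + #Z) ≤ 2 * k * #X := by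
      nlinarith [Nat.mul_le_mul_right #X hZ, Nat.mul_le_mul_right #Z hkX]
    linarith

theorem IsEulerianOrientation.exists_arc_not_mem_union {k : ℕ}
    {D : (Fin (2 * k) → Bool) → (Fin (2 * k) → Bool) → Bool}
    (hD : IsEulerianOrientation (cube (2 * k)) D) {X Z : Finset (Fin (2 * k) → Bool)}
    (hXZ : Disjoint X Z) (hX : X.Nonempty) (hX2 : 2 * #X ≤ 2 ^ (2 * k)) (hZ : #Z < k) :
    ∃ a ∈ X, ∃ b, D a b = true ∧ b ∉ X ∪ Z := by
  by_contra! hclosed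
  have hcount := hD.two_mul_mul_card_eq cube_isRegularOfDegree hXZ hclosed
  have h₁ := hD.arcs_le_mul_card cube_isRegularOfDegree X Z
  have h₂ := hD.1.arcs_le_card_interedges X Z
  have := card_interedges_add_two_mul_min_lt hXZ hX hX2 hZ
  omega

lemma exists_dicut_of_not_stronglyConnectedOn {α : Type*} [Fintype α] [DecidableEq α]
    {D : α → α → Bool} {R : Finset α} (h : ¬StronglyConnectedOn D R) :
    ∃ A B : Finset α, A ∪ B = R ∧ Disjoint A B ∧ A.Nonempty ∧ B.Nonempty ∧
      ∀ a ∈ A, ∀ b ∈ B, D a b = false := by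
  classical
  simp only [StronglyConnectedOn, not_forall] at h
  obtain ⟨v, hv, w, hw, hvw⟩ := h
  set A := {u ∈ R | Relation.ReflTransGen (fun a b => a ∈ R ∧ b ∈ R ∧ D a b = true) v u}
  refine ⟨A, R \ A, union_sdiff_of_subset (filter_subset _ _), disjoint_sdiff,
    ⟨v, mem_filter.2 ⟨hv, Relation.ReflTransGen.refl⟩⟩,
    ⟨w, mem_sdiff.2 ⟨hw, fun h => hvw (mem_filter.1 h).2⟩⟩, fun a ha b hb => ?_⟩
  rw [mem_sdiff] at hb
  rw [mem_filter] at ha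
  by_contra hab
  exact hb.2 (mem_filter.2 ⟨hb.1, ha.2.tail ⟨ha.1, hb.1, Bool.not_eq_false _ ▸ hab⟩⟩)

/-- Every Eulerian orientation of the hypercube `Q_{2k}` is strongly
`k`-vertex-connected. -/
theorem stmt4 (k : ℕ) (hk : 1 ≤ k)
    (D : (Fin (2 * k) → Bool) → (Fin (2 * k) → Bool) → Bool)
    (hD : IsEulerianOrientation (cube (2 * k)) D) :
    StronglyKConnected k D := by
  refine ⟨?_, fun Z hZ => by_contra fun hR => ?_⟩
  · simpa using
      Nat.lt_two_pow_self.trans_le (Nat.pow_le_pow_right two_pos (by omega : k ≤ 2 * k))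
  obtain ⟨A, B, hAB, hdisj, hA, hB, hcut⟩ := exists_dicut_of_not_stronglyConnectedOn hR
  have hZk : #Z < k := by omega
  have hcard : #A + #B ≤ 2 ^ (2 * k) := by
    rw [← card_union_of_disjoint hdisj, hAB]
    simpa using card_le_univ (univ \ Z)
  have hmem : ∀ v ∉ Z, v ∈ A ∪ B := fun v hv => hAB ▸ mem_sdiff.2 ⟨mem_univ v, hv⟩
  have hZ' : Disjoint (A ∪ B) Z := hAB ▸ sdiff_disjoint
  rcases le_total #A #B with hle | hle
  · obtain ⟨a, ha, b, hab, hb⟩ := hD.exists_arc_not_mem_union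
      (disjoint_of_subset_left subset_union_left hZ') hA (by omega) hZk
    rw [mem_union, not_or] at hb
    simp [hcut a ha b ((mem_union.1 (hmem b hb.2)).resolve_left hb.1)] at hab
  · obtain ⟨b, hb, a, hab, ha⟩ := hD.reverse.exists_arc_not_mem_union
      (disjoint_of_subset_left subset_union_right hZ') hB (by omega) hZk
    rw [mem_union, not_or] at ha
    simp [hcut a ((mem_union.1 (hmem a ha.2)).resolve_right ha.1) b hb] at hab
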